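/- arXiv:2605.13529 — 5 statements merged into one kernel-verified Lean document; each statement's English description precedes it below -/
import Mathlib

section
/- Let A be an m×m complex Hermitian matrix (Aᴴ = A) and B an m×m complex skew-Hermitian matrix (Bᴴ = -B). Then the 2m×2m block matrix Ψ = [[A, -B], [B, A]] is Hermitian, the matrices A - iB and A + iB are Hermitian, and Ψ is positive semidefinite if and only if both A - iB and A + iB are positive semidefinite. -/
open Matrix
open scoped ComplexOrder

/-!
Write `Ψ = [[A, -B], [B, A]]` and `W = [[1, -i], [1, i]]`, so that `W (x, y) = (x - i y, x + i y)`.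
A direct computation gives `2 Ψ = Wᴴ (diag (A - iB, A + iB)) W`, and `W Wᴴ = 2`, so `W` is
invertible. Positive semidefiniteness is invariant under congruence by an invertible matrix and
under positive scaling, and a block-diagonal matrix is positive semidefinite iff its diagonal
blocks are.
-/

namespace Matrix

theorem posSemidef_smul_iff {n R : Type*} [Field R] [PartialOrder R] [PosMulReflectLT R]
    [StarRing R] [StarOrderedRing R] {x : Matrix n n R} {a : R} (ha : 0 < a) :
    (a • x).PosSemidef ↔ x.PosSemidef := by
  refine ⟨fun h => ?_, fun h => h.smul ha.le⟩
  simpa [smul_smul, inv_mul_cancel₀ ha.ne'] using h.smul (inv_pos.mpr ha).le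

theorem posSemidef_fromBlocks_zero_iff {m n R : Type*} [Fintype m] [Fintype n] [CommRing R]
    [PartialOrder R] [StarRing R] [StarOrderedRing R] {P : Matrix m m R} {Q : Matrix n n R} :
    (fromBlocks P 0 0 Q).PosSemidef ↔ P.PosSemidef ∧ Q.PosSemidef := by
  refine ⟨fun h => ⟨h.submatrix Sum.inl, h.submatrix Sum.inr⟩, fun ⟨hP, hQ⟩ => ?_⟩
  refine .of_dotProduct_mulVec_nonneg (hP.isHermitian.fromBlocks (by simp) hQ.isHermitian)
    fun z => ?_
  rw [← Sum.elim_comp_inl_inr z, fromBlocks_mulVec, Function.star_sumElim,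
    sumElim_dotProduct_sumElim]
  simpa using add_nonneg (hP.dotProduct_mulVec_nonneg _) (hQ.dotProduct_mulVec_nonneg _)

theorem isHermitian_I_smul {n : Type*} {B : Matrix n n ℂ} (hB : Bᴴ = -B) :
    (Complex.I • B).IsHermitian := by
  simp [IsHermitian, conjTranspose_smul, hB]

section ComplexStructure

variable {n : Type*} [Fintype n] [DecidableEq n]

variable (n) in
def complexStructureDiagonalizer : Matrix (n ⊕ n) (n ⊕ n) ℂ :=
  fromBlocks 1 (-(Complex.I • 1)) 1 (Complex.I • 1)

theorem complexStructureDiagonalizer_mul_star :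
    complexStructureDiagonalizer n * star (complexStructureDiagonalizer n) = (2 : ℂ) • 1 := by
  simp only [complexStructureDiagonalizer, star_eq_conjTranspose, fromBlocks_conjTranspose,
    conjTranspose_smul, conjTranspose_one, conjTranspose_neg, Complex.star_def, Complex.conj_I,
    fromBlocks_multiply, Matrix.mul_one, Matrix.one_mul, Matrix.smul_mul, Matrix.mul_smul,
    Matrix.neg_mul, smul_smul, ← fromBlocks_one, fromBlocks_smul, fromBlocks_inj]
  refine ⟨?_, ?_, ?_, ?_⟩ <;> match_scalars <;> ring_nf <;> norm_num [Complex.I_sq]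

theorem isUnit_complexStructureDiagonalizer : IsUnit (complexStructureDiagonalizer n) := by
  refine .of_mul_eq_one ((1 / 2 : ℂ) • star (complexStructureDiagonalizer n)) ?_
  rw [Matrix.mul_smul, complexStructureDiagonalizer_mul_star, smul_smul]
  norm_num

theorem two_smul_fromBlocks_neg_eq (A B : Matrix n n ℂ) :
    (2 : ℂ) • fromBlocks A (-B) B A =
      star (complexStructureDiagonalizer n) *
        fromBlocks (A - Complex.I • B) 0 0 (A + Complex.I • B) *
          complexStructureDiagonalizer n := by
  simp only [complexStructureDiagonalizer, star_eq_conjTranspose, fromBlocks_conjTranspose,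
    conjTranspose_smul, conjTranspose_one, conjTranspose_neg, Complex.star_def, Complex.conj_I,
    fromBlocks_multiply, Matrix.mul_one, Matrix.one_mul, Matrix.smul_mul, Matrix.mul_smul,
    Matrix.neg_mul, Matrix.mul_neg, Matrix.mul_zero, smul_smul, fromBlocks_smul, fromBlocks_inj,
    smul_sub, smul_add, add_zero, zero_add]
  refine ⟨?_, ?_, ?_, ?_⟩ <;> match_scalars <;> ring_nf <;> norm_num [Complex.I_sq]

theorem posSemidef_fromBlocks_neg_iff (A B : Matrix n n ℂ) :
    (fromBlocks A (-B) B A).PosSemidef ↔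
      (A - Complex.I • B).PosSemidef ∧ (A + Complex.I • B).PosSemidef := by
  rw [← posSemidef_smul_iff (two_pos : (0 : ℂ) < 2), two_smul_fromBlocks_neg_eq,
    isUnit_complexStructureDiagonalizer.posSemidef_star_left_conjugate_iff,
    posSemidef_fromBlocks_zero_iff]

end ComplexStructure

end Matrix

/-- For `A` Hermitian and `B` skew-Hermitian, the block matrix
`Ψ = [[A, -B], [B, A]]` is Hermitian, `A - iB` and `A + iB` are Hermitian, and `Ψ` is
positive semidefinite iff both `A - iB` and `A + iB` are positive semidefinite. -/
theorem blockMatrix_posSemidef_iff (m : ℕ) (A B : Matrix (Fin m) (Fin m) ℂ)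
    (hA : A.IsHermitian) (hB : Bᴴ = -B) :
    (Matrix.fromBlocks A (-B) B A).IsHermitian ∧
    (A - Complex.I • B).IsHermitian ∧
    (A + Complex.I • B).IsHermitian ∧
    ((Matrix.fromBlocks A (-B) B A).PosSemidef ↔
      (A - Complex.I • B).PosSemidef ∧ (A + Complex.I • B).PosSemidef) := by
  have hIB : (Complex.I • B).IsHermitian := isHermitian_I_smul hB
  exact ⟨hA.fromBlocks (by simp [hB]) hA, hA.sub hIB, hA.add hIB,
    posSemidef_fromBlocks_neg_iff A B⟩
end

section
/- Let C > 0, y ∈ ℝ, θ₀, ω₀, σ₀ ∈ ℝ, and define s(ν) = e^{iθ₀}(ν + σ₀) + iω₀, the pole ν_p = -σ₀ + (y/C)·e^{-iθ₀} - ω₀·e^{i(π/2 - θ₀)}, and the virtual admittance y^v = C·Re(ν_p) = -C·σ₀ + y·cos θ₀ - C·ω₀·sin θ₀. Then: (1) for every ν ∈ ℂ with ν ≠ ν_p, one has C·s(ν) - y = C·e^{iθ₀}(ν - ν_p), so that e^{iθ₀}/(C·s(ν) - y) = 1/(C(ν - ν_p)); (2) for every ν ≠ ν_p with ν ≠ i·Im(ν_p),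 the loop-transformed value Ĝ(ν)/(1 + y^v·Ĝ(ν)), where Ĝ(ν) = 1/(C(ν - ν_p)), equals 1/(C(ν - i·Im ν_p)); and (3) for every real ω ≠ Im(ν_p), Re(1/(C(iω - i·Im ν_p))) = 0. -/
/-!
The map `s` is affine with slope `e^{iθ₀}`, and `ν_p` is the point where `s(ν_p) = y / C`;
hence `C s(ν) - y = C (s(ν) - s(ν_p)) = C e^{iθ₀} (ν - ν_p)`. The loop transformation is
`Ĝ / (1 + y^v Ĝ) = 1 / (Ĝ⁻¹ + y^v)`, and adding `y^v = C Re ν_p` to `Ĝ⁻¹ = C (ν - ν_p)`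
removes the real part of the pole. Finally, the inverse of a purely imaginary number is
purely imaginary.
-/

open Complex

noncomputable def complexMapping (θ₀ ω₀ σ₀ : ℝ) (ν : ℂ) : ℂ :=
  exp (θ₀ * I) * (ν + σ₀) + ω₀ * I

noncomputable def cplPole (C y θ₀ ω₀ σ₀ : ℝ) : ℂ :=
  -(σ₀ : ℂ) + (y / C : ℝ) * exp (-θ₀ * I) - (ω₀ : ℝ) * exp ((Real.pi / 2 - θ₀) * I)

theorem exp_pi_div_two_sub_mul_I (θ : ℝ) :
    exp ((Real.pi / 2 - θ) * I) = I * exp (-θ * I) := by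
  rw [sub_mul, sub_eq_add_neg, exp_add, exp_pi_div_two_mul_I, neg_mul]

theorem div_one_add_mul_eq_one_div_inv_add {K : Type*} [Field K] {x : K} (a : K) (hx : x ≠ 0) :
    x / (1 + a * x) = 1 / (x⁻¹ + a) := by
  rw [show x⁻¹ + a = x⁻¹ * (1 + a * x) by field_simp, one_div, mul_inv, inv_inv, div_eq_mul_inv]

theorem sub_add_re_eq_sub_I_mul_im (ν p : ℂ) : ν - p + p.re = ν - I * p.im := by
  apply Complex.ext <;> simp

theorem re_inv_eq_zero_of_re_eq_zero {z : ℂ} (hz : z.re = 0) : z⁻¹.re = 0 := by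
  rw [inv_re, hz, zero_div]

section Pole

variable (C y θ₀ ω₀ σ₀ : ℝ)

theorem complexMapping_sub (ν μ : ℂ) :
    complexMapping θ₀ ω₀ σ₀ ν - complexMapping θ₀ ω₀ σ₀ μ = exp (θ₀ * I) * (ν - μ) := by
  unfold complexMapping
  ring

theorem complexMapping_cplPole :
    complexMapping θ₀ ω₀ σ₀ (cplPole C y θ₀ ω₀ σ₀) = y / C := by
  have hinv : exp (θ₀ * I) * exp (-θ₀ * I) = 1 := by
    rw [← exp_add, neg_mul, add_neg_cancel, exp_zero]
  unfold complexMapping cplPole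
  rw [exp_pi_div_two_sub_mul_I]
  push_cast
  linear_combination (y / C - ω₀ * I) * hinv

theorem mul_complexMapping_sub_eq (hC : C ≠ 0) (ν : ℂ) :
    C * complexMapping θ₀ ω₀ σ₀ ν - y = C * exp (θ₀ * I) * (ν - cplPole C y θ₀ ω₀ σ₀) := by
  have hC' : (C : ℂ) ≠ 0 := ofReal_ne_zero.mpr hC
  calc C * complexMapping θ₀ ω₀ σ₀ ν - y
      = C * (complexMapping θ₀ ω₀ σ₀ ν - complexMapping θ₀ ω₀ σ₀ (cplPole C y θ₀ ω₀ σ₀)) := by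
        rw [complexMapping_cplPole]; field_simp
    _ = C * exp (θ₀ * I) * (ν - cplPole C y θ₀ ω₀ σ₀) := by
        rw [complexMapping_sub, mul_assoc]

theorem cplPole_re :
    (cplPole C y θ₀ ω₀ σ₀).re = -σ₀ + y / C * Real.cos θ₀ - ω₀ * Real.sin θ₀ := by
  simp [cplPole, exp_re, Real.cos_neg, Real.cos_pi_div_two_sub]

end Pole

/-- For a CPL `G(s) = 1/(Cs - y)` with `C > 0`, under the mapping
`s(ν) = e^{iθ₀}(ν + σ₀) + iω₀`, the rotated device `e^{iθ₀}G(s(ν))` equals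
`1/(C(ν - ν_p))` with pole `ν_p = -σ₀ + (y/C)e^{-iθ₀} - ω₀e^{i(π/2-θ₀)}`; the loop
transformation with virtual admittance `y^v = C·Re ν_p` moves the pole onto the
imaginary axis, and the transformed device has zero real part on the imaginary axis. -/
theorem cpl_loop_transformation (C y θ₀ ω₀ σ₀ : ℝ) (hC : 0 < C) :
    let s : ℂ → ℂ := fun ν => Complex.exp (θ₀ * Complex.I) * (ν + σ₀) + ω₀ * Complex.I
    let νp : ℂ := -(σ₀ : ℂ) + (y / C : ℝ) * Complex.exp (-θ₀ * Complex.I)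
        - (ω₀ : ℝ) * Complex.exp ((Real.pi / 2 - θ₀) * Complex.I)
    let yv : ℝ := -C * σ₀ + y * Real.cos θ₀ - C * ω₀ * Real.sin θ₀
    let Ghat : ℂ → ℂ := fun ν => 1 / (C * (ν - νp))
    yv = C * νp.re ∧
    (∀ ν : ℂ, ν ≠ νp →
      (C * s ν - y = C * Complex.exp (θ₀ * Complex.I) * (ν - νp) ∧
       Complex.exp (θ₀ * Complex.I) / (C * s ν - y) = 1 / (C * (ν - νp)))) ∧
    (∀ ν : ℂ, ν ≠ νp → ν ≠ Complex.I * νp.im →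
      Ghat ν / (1 + yv * Ghat ν) = 1 / (C * (ν - Complex.I * νp.im))) ∧
    (∀ ω : ℝ, ω ≠ νp.im →
      (1 / (C * (Complex.I * ω - Complex.I * νp.im))).re = 0) := by
  intro s νp yv Ghat
  have hs : s = complexMapping θ₀ ω₀ σ₀ := rfl
  have hνp : νp = cplPole C y θ₀ ω₀ σ₀ := rfl
  have hGhat : Ghat = fun ν => 1 / (C * (ν - νp)) := rfl
  clear_value s νp Ghat
  subst hs hνp hGhat
  have hC0 : C ≠ 0 := hC.ne'
  have hyv : yv = C * (cplPole C y θ₀ ω₀ σ₀).re := by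
    rw [cplPole_re]; simp only [yv]; field_simp
  refine ⟨hyv, fun ν _ => ⟨mul_complexMapping_sub_eq C y θ₀ ω₀ σ₀ hC0 ν, ?_⟩, fun ν hν _ => ?_,
    fun ω _ => ?_⟩
  · rw [mul_complexMapping_sub_eq C y θ₀ ω₀ σ₀ hC0 ν, mul_comm (C : ℂ), mul_assoc,
      div_mul_cancel_left₀ (exp_ne_zero _), one_div]
  · have hG : 1 / (C * (ν - cplPole C y θ₀ ω₀ σ₀)) ≠ 0 :=
      one_div_ne_zero (mul_ne_zero (ofReal_ne_zero.mpr hC0) (sub_ne_zero.mpr hν))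
    rw [div_one_add_mul_eq_one_div_inv_add _ hG, hyv, ofReal_mul, inv_div, div_one, ← mul_add,
      sub_add_re_eq_sub_I_mul_im]
  · rw [one_div]
    exact re_inv_eq_zero_of_re_eq_zero (by simp)
end

section
/- Let a₁ = a₁ᵣ + i·a₁ᵢ, a₀ = a₀ᵣ + i·a₀ᵢ, b₁ = b₁ᵣ + i·b₁ᵢ, b₀ = b₀ᵣ + i·b₀ᵢ be complex numbers (with real components as indicated). Suppose: (i) b₁ᵣ > 0 and b₁ᵣ²·b₀ᵣ + b₁ᵣ·b₁ᵢ·b₀ᵢ - b₀ᵢ² > 0; and (ii) a₁ᵢ = 0, a₁ᵣ·b₁ᵣ - a₀ᵣ ≥ 0, a₀ᵣ·b₀ᵣ + a₀ᵢ·b₀ᵢ ≥ 0, and (a₀ᵢ·b₁ᵣ + a₁ᵣ·b₀ᵢ - a₀ᵣ·b₁ᵢ)² ≤ 4·(a₁ᵣ·b₁ᵣ - a₀ᵣ)·(a₀ᵣ·b₀ᵣ + a₀ᵢ·b₀ᵢ). Then: (1) every complex root ν of the polynomial ν² + b₁·ν + b₀ satisfies Re ν < 0; and (2) for every real ω, (iω)²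 + b₁·(iω) + b₀ ≠ 0 and Re((a₁·(iω) + a₀) / ((iω)² + b₁·(iω) + b₀)) ≥ 0. -/
/-- Under the coefficient conditions (i)–(ii), the second-order complex
rational function `h(ν) = (a₁ν + a₀)/(ν² + b₁ν + b₀)` is a positive function: all roots
of the denominator lie in the open left half-plane, and on the imaginary axis the
denominator is nonzero and `Re h(iω) ≥ 0`. -/
theorem secondOrder_positive_function (a1r a1i a0r a0i b1r b1i b0r b0i : ℝ)
    (hb1 : 0 < b1r)
    (hb2 : 0 < b1r ^ 2 * b0r + b1r * b1i * b0i - b0i ^ 2)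
    (ha1 : a1i = 0)
    (ha2 : 0 ≤ a1r * b1r - a0r)
    (ha3 : 0 ≤ a0r * b0r + a0i * b0i)
    (ha4 : (a0i * b1r + a1r * b0i - a0r * b1i) ^ 2
        ≤ 4 * (a1r * b1r - a0r) * (a0r * b0r + a0i * b0i)) :
    let a1 : ℂ := a1r + a1i * Complex.I
    let a0 : ℂ := a0r + a0i * Complex.I
    let b1 : ℂ := b1r + b1i * Complex.I
    let b0 : ℂ := b0r + b0i * Complex.I
    (∀ ν : ℂ, ν ^ 2 + b1 * ν + b0 = 0 → ν.re < 0) ∧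
    (∀ ω : ℝ,
      (Complex.I * ω) ^ 2 + b1 * (Complex.I * ω) + b0 ≠ 0 ∧
      0 ≤ ((a1 * (Complex.I * ω) + a0) /
            ((Complex.I * ω) ^ 2 + b1 * (Complex.I * ω) + b0)).re) := by
  intro a1 a0 b1 b0
  constructor
  · intro ν hν
    by_contra h
    push_neg at h
    rw [Complex.ext_iff] at hν
    simp only [b1, b0, Complex.add_re, Complex.add_im, Complex.mul_re, Complex.mul_im,
      Complex.ofReal_re, Complex.ofReal_im, Complex.I_re, Complex.I_im, pow_two,
      Complex.zero_re, Complex.zero_im] at hν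
    obtain ⟨h1, h2⟩ := hν
    have e1 : b0r = -(ν.re ^ 2 - ν.im ^ 2 + b1r * ν.re - b1i * ν.im) := by
      linear_combination h1
    have e2 : b0i = -(2 * ν.re * ν.im + b1r * ν.im + b1i * ν.re) := by
      linear_combination h2
    rw [e1, e2] at hb2
    nlinarith [mul_nonneg (mul_nonneg h (by linarith : (0:ℝ) ≤ ν.re + b1r))
        (by positivity : (0:ℝ) ≤ (b1i + 2 * ν.im) ^ 2 + b1r ^ 2)]
  · intro ω
    have hD : (Complex.I * ω) ^ 2 + b1 * (Complex.I * ω) + b0 ≠ 0 := by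
      intro hz
      rw [Complex.ext_iff] at hz
      simp only [b1, b0, Complex.add_re, Complex.add_im, Complex.mul_re, Complex.mul_im,
        Complex.ofReal_re, Complex.ofReal_im, Complex.I_re, Complex.I_im, pow_two,
        Complex.zero_re, Complex.zero_im] at hz
      obtain ⟨h1, h2⟩ := hz
      have e1 : b0r = ω ^ 2 + b1i * ω := by linear_combination h1
      have e2 : b0i = -(b1r * ω) := by linear_combination h2
      rw [e1, e2] at hb2
      nlinarith [hb2]
    refine ⟨hD, ?_⟩
    rw [Complex.div_re, ← add_div]
    apply div_nonneg _ (Complex.normSq_nonneg _)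
    simp only [a1, a0, b1, b0, ha1, Complex.add_re, Complex.add_im, Complex.mul_re,
      Complex.mul_im, Complex.ofReal_re, Complex.ofReal_im, Complex.I_re, Complex.I_im,
      pow_two]
    ring_nf
    rcases eq_or_lt_of_le ha2 with hA | hA
    · have hB : a0i * b1r + a1r * b0i - a0r * b1i = 0 := by
        have : (a0i * b1r + a1r * b0i - a0r * b1i) ^ 2 ≤ 0 := by
          calc (a0i * b1r + a1r * b0i - a0r * b1i) ^ 2
              ≤ 4 * (a1r * b1r - a0r) * (a0r * b0r + a0i * b0i) := ha4
            _ = 0 := by rw [← hA]; ring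
        nlinarith [sq_nonneg (a0i * b1r + a1r * b0i - a0r * b1i)]
      have h5 : (a1r * b1r - a0r) * ω ^ 2 = 0 := by rw [← hA]; ring
      have h6 : (a0i * b1r + a1r * b0i - a0r * b1i) * ω = 0 := by rw [hB]; ring
      nlinarith [h5, h6, ha3]
    · nlinarith [hA, ha4, ha3,
        sq_nonneg (2 * (a1r * b1r - a0r) * ω + (a0i * b1r + a1r * b0i - a0r * b1i))]
end

section
/- Let b₁ = b₁ᵣ + i·b₁ᵢ and b₀ = b₀ᵣ + i·b₀ᵢ be complex numbers with real components as indicated. Both roots of the monic quadratic polynomial ν² + b₁·ν + b₀ lie in the open left half-plane {ν ∈ ℂ : Re ν < 0} if and only if b₁ᵣ > 0 and b₁ᵣ²·b₀ᵣ + b₁ᵣ·b₁ᵢ·b₀ᵢ - b₀ᵢ² > 0. -/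
lemma hurwitz_real_aux (x1 y1 x2 y2 : ℝ) :
    (x1 < 0 ∧ x2 < 0) ↔
      (0 < -(x1 + x2) ∧
        0 < (-(x1 + x2)) ^ 2 * (x1 * x2 - y1 * y2) +
            (-(x1 + x2)) * (-(y1 + y2)) * (x1 * y2 + x2 * y1) -
            (x1 * y2 + x2 * y1) ^ 2) := by
  have key : (-(x1 + x2)) ^ 2 * (x1 * x2 - y1 * y2) +
      (-(x1 + x2)) * (-(y1 + y2)) * (x1 * y2 + x2 * y1) -
      (x1 * y2 + x2 * y1) ^ 2 = x1 * x2 * ((x1 + x2) ^ 2 + (y1 - y2) ^ 2) := by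
    ring
  rw [key]
  constructor
  · rintro ⟨h1, h2⟩
    constructor
    · linarith
    · have hp : 0 < x1 * x2 := mul_pos_of_neg_of_neg h1 h2
      have hq : 0 < (x1 + x2) ^ 2 + (y1 - y2) ^ 2 := by
        have : x1 + x2 < 0 := by linarith
        have := sq_nonneg (y1 - y2)
        nlinarith
      exact mul_pos hp hq
  · rintro ⟨h1, h2⟩
    have hx : 0 < x1 * x2 := by
      nlinarith [sq_nonneg (y1 - y2), sq_nonneg (x1 + x2)]
    constructor
    · nlinarith
    · nlinarith

/-- Generalized Routh–Hurwitz criterion for a complex monic quadratic: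
all roots of `ν² + b₁ν + b₀` lie in the open left half-plane iff `b₁ᵣ > 0` and
`b₁ᵣ²b₀ᵣ + b₁ᵣb₁ᵢb₀ᵢ - b₀ᵢ² > 0`. -/
theorem complex_quadratic_hurwitz_iff (b1r b1i b0r b0i : ℝ) :
    let b1 : ℂ := b1r + b1i * Complex.I
    let b0 : ℂ := b0r + b0i * Complex.I
    ((∀ ν : ℂ, ν ^ 2 + b1 * ν + b0 = 0 → ν.re < 0) ↔
      (0 < b1r ∧ 0 < b1r ^ 2 * b0r + b1r * b1i * b0i - b0i ^ 2)) := by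
  intro b1 b0
  obtain ⟨s, hs⟩ := IsAlgClosed.exists_pow_nat_eq (b1 ^ 2 - 4 * b0) (n := 2) (by norm_num)
  set ρ : ℂ := (-b1 + s) / 2 with hρ
  set σ : ℂ := (-b1 - s) / 2 with hσ
  have hρroot : ρ ^ 2 + b1 * ρ + b0 = 0 := by
    rw [hρ]; linear_combination hs / 4
  have hσroot : σ ^ 2 + b1 * σ + b0 = 0 := by
    rw [hσ]; linear_combination hs / 4
  have hb1 : b1 = -(ρ + σ) := by rw [hρ, hσ]; ring
  have hb0 : b0 = ρ * σ := by rw [hρ, hσ]; linear_combination hs / 4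
  set x1 := ρ.re; set y1 := ρ.im; set x2 := σ.re; set y2 := σ.im
  have h1r : b1r = -(x1 + x2) := by
    have := congrArg Complex.re hb1
    simpa [b1, Complex.add_re, Complex.mul_re] using this
  have h1i : b1i = -(y1 + y2) := by
    have := congrArg Complex.im hb1
    simpa [b1, Complex.add_im, Complex.mul_im] using this
  have h0r : b0r = x1 * x2 - y1 * y2 := by
    have := congrArg Complex.re hb0
    simpa [b0, Complex.add_re, Complex.mul_re] using this
  have h0i : b0i = x1 * y2 + x2 * y1 := by
    have := congrArg Complex.im hb0
    have h' : b0i = x1 * y2 + y1 * x2 := by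
      simpa [b0, Complex.add_im, Complex.mul_im] using this
    linarith
  have key := hurwitz_real_aux x1 y1 x2 y2
  constructor
  · intro h
    have hx1 : x1 < 0 := h ρ hρroot
    have hx2 : x2 < 0 := h σ hσroot
    obtain ⟨ha, hb⟩ := key.mp ⟨hx1, hx2⟩
    refine ⟨by rw [h1r]; exact ha, ?_⟩
    rw [h1r, h1i, h0r, h0i]; nlinarith [hb]
  · rintro ⟨ha, hb⟩
    rw [h1r] at ha
    rw [h1r, h1i, h0r, h0i] at hb
    have hb' : 0 < (-(x1 + x2)) ^ 2 * (x1 * x2 - y1 * y2) +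
        (-(x1 + x2)) * (-(y1 + y2)) * (x1 * y2 + x2 * y1) -
        (x1 * y2 + x2 * y1) ^ 2 := by nlinarith [hb]
    obtain ⟨hx1, hx2⟩ := key.mpr ⟨ha, hb'⟩
    intro ν hν
    have hfac : (ν - ρ) * (ν - σ) = 0 := by
      linear_combination hν - hs / 4
    rcases mul_eq_zero.mp hfac with h | h
    · rw [sub_eq_zero.mp h]; exact hx1
    · rw [sub_eq_zero.mp h]; exact hx2
end

section
/- Let c₁ > 0, c₀ > 0, and d₁, d₀, α, y be real numbers satisfying: c₁·α + c₀ > 0; c₁²·y ≤ c₁·(d₁ + α) - c₀; and (c₁·α + c₀)·y < α² + d₁·α + d₀. Define the complex rational function G̃(ν) = (c₁·ν + (c₁·α + c₀)) / (ν² + (d₁ + 2α - c₁·y)·ν + (α² + d₁·α + d₀ - (c₁·α + c₀)·y)). Then: (1) every complex root ν of the denominator ν² + (d₁ + 2α - c₁y)·ν + (α² + d₁α + d₀ - (c₁α + c₀)y) satisfies Re ν < 0; and (2) for every real ω, the denominator evaluated at iω is nonzero and Re(G̃(iω)) ≥ 0. -/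
/-!
Write `b = d₁ + 2α - c₁y`, `c = α² + d₁α + d₀ - (c₁α + c₀)y` and `a = c₁α + c₀` for the
coefficients of `G̃`. The hypotheses give `c > 0` and `c₁b ≥ a > 0`, hence also
`b > 0`. A monic real quadratic with positive coefficients is Hurwitz: a non-real root has real
part `-b/2`, and a real root cannot be nonnegative. On the imaginary axis the real part of
`G̃(iω)` has the sign of `a(c - ω²) + c₁bω² = ac + (c₁b - a)ω² ≥ 0`.
-/

open Complex

theorem Complex.re_div_nonneg_of_nonneg {z w : ℂ} (h : 0 ≤ z.re * w.re + z.im * w.im) :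
    0 ≤ (z / w).re := by
  rw [div_re, ← add_div]
  exact div_nonneg h (normSq_nonneg w)

theorem re_neg_of_sq_add_mul_add_eq_zero {b c : ℝ} (hb : 0 < b) (hc : 0 < c) {z : ℂ}
    (hz : z ^ 2 + (b : ℂ) * z + (c : ℂ) = 0) : z.re < 0 := by
  have hre : z.re ^ 2 - z.im ^ 2 + b * z.re + c = 0 := by
    simpa [sq] using congrArg re hz
  have him : z.im * (2 * z.re + b) = 0 := by
    have := congrArg im hz
    simp only [sq, add_im, mul_im, ofReal_re, ofReal_im, zero_im] at this
    linarith
  rcases mul_eq_zero.mp him with hy | hx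
  · by_contra! hx
    rw [hy] at hre
    nlinarith [mul_nonneg hb.le hx]
  · linarith

theorem re_div_quadratic_on_imaginary_axis_nonneg {k a b c : ℝ} (ha : 0 ≤ a) (hc : 0 < c)
    (hab : a ≤ k * b) (ω : ℝ) :
    0 ≤ (((k : ℂ) * (I * ω) + a) /
      ((I * ω) ^ 2 + (b : ℂ) * (I * ω) + (c : ℂ))).re := by
  apply Complex.re_div_nonneg_of_nonneg
  simp only [sq, add_re, add_im, mul_re, mul_im, I_re, I_im, ofReal_re, ofReal_im]
  nlinarith [mul_nonneg ha hc.le, mul_nonneg (sub_nonneg.mpr hab) (sq_nonneg ω)]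

theorem shiftedLHP_modified_device_positive_general (c1 c0 d1 d0 α y : ℝ)
    (hc1 : 0 < c1)
    (h1 : 0 < c1 * α + c0)
    (h2 : c1 ^ 2 * y ≤ c1 * (d1 + α) - c0)
    (h3 : (c1 * α + c0) * y < α ^ 2 + d1 * α + d0) :
    let den : ℂ → ℂ := fun ν =>
      ν ^ 2 + ((d1 + 2 * α - c1 * y : ℝ) : ℂ) * ν
        + ((α ^ 2 + d1 * α + d0 - (c1 * α + c0) * y : ℝ) : ℂ)
    let num : ℂ → ℂ := fun ν => (c1 : ℂ) * ν + ((c1 * α + c0 : ℝ) : ℂ)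
    (∀ ν : ℂ, den ν = 0 → ν.re < 0) ∧
    (∀ ω : ℝ,
      den (Complex.I * ω) ≠ 0 ∧
      0 ≤ (num (Complex.I * ω) / den (Complex.I * ω)).re) := by
  intro den num
  have hc : 0 < α ^ 2 + d1 * α + d0 - (c1 * α + c0) * y := by linarith
  have hab : c1 * α + c0 ≤ c1 * (d1 + 2 * α - c1 * y) := by linarith
  have hb : 0 < d1 + 2 * α - c1 * y := pos_of_mul_pos_right (h1.trans_le hab) hc1.le
  have hurwitz : ∀ ν : ℂ, den ν = 0 → ν.re < 0 := fun ν =>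
    re_neg_of_sq_add_mul_add_eq_zero hb hc
  refine ⟨hurwitz, fun ω => ⟨fun h => ?_, ?_⟩⟩
  · simpa using hurwitz _ h
  · exact re_div_quadratic_on_imaginary_axis_nonneg h1.le hc hab ω

/-- For a source device `G(s) = (c₁s + c₀)/(s² + d₁s + d₀)` with
`c₁, c₀ > 0`, the shifted-LHP modified device
`G̃(ν) = (c₁ν + (c₁α + c₀))/(ν² + (d₁ + 2α - c₁y)ν + (α² + d₁α + d₀ - (c₁α + c₀)y))`
is a positive function under the stated constraints on `α` and `y`: all poles lie in the
open left half-plane and `Re G̃(iω) ≥ 0` on the imaginary axis. -/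
theorem shiftedLHP_modified_device_positive (c1 c0 d1 d0 α y : ℝ)
    (hc1 : 0 < c1) (hc0 : 0 < c0)
    (h1 : 0 < c1 * α + c0)
    (h2 : c1 ^ 2 * y ≤ c1 * (d1 + α) - c0)
    (h3 : (c1 * α + c0) * y < α ^ 2 + d1 * α + d0) :
    let den : ℂ → ℂ := fun ν =>
      ν ^ 2 + ((d1 + 2 * α - c1 * y : ℝ) : ℂ) * ν
        + ((α ^ 2 + d1 * α + d0 - (c1 * α + c0) * y : ℝ) : ℂ)
    let num : ℂ → ℂ := fun ν => (c1 : ℂ) * ν + ((c1 * α + c0 : ℝ) : ℂ)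
    (∀ ν : ℂ, den ν = 0 → ν.re < 0) ∧
    (∀ ω : ℝ,
      den (Complex.I * ω) ≠ 0 ∧
      0 ≤ (num (Complex.I * ω) / den (Complex.I * ω)).re) :=
  shiftedLHP_modified_device_positive_general c1 c0 d1 d0 α y hc1 h1 h2 h3
end
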